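/- For every (x₁,x₂) ∈ ℝ² satisfying x₁ + x₂ ≥ 1, x₁² + x₂² ≥ 1, 9x₁² + x₂² ≥ 9, x₂ ≤ x₁², x₁ ≤ x₂², and −50 ≤ x₁ ≤ 50, −50 ≤ x₂ ≤ 50, one has x₁² + x₂² ≥ 2; moreover equality x₁² + x₂² = 2 holds for a feasible point if and only if (x₁,x₂) = (1,1). Hence the constrained minimum of x₁² + x₂² over this feasible set equals 2 and is attained uniquely at (1,1). -/

import Mathlib

/-! Adding `x₁ + x₂ ≥ 1` to the two parabola constraints `x₂ ≤ x₁²`, `x₁ ≤ x₂²` already forces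
`x₁² + x₂² ≥ 2`. If both coordinates are positive, then `x₁ ≤ x₂² ≤ x₁⁴`, so `x₁ ≥ 1`, and
symmetrically `x₂ ≥ 1`. If, say, `x₂ ≤ 0`, then `x₁ ≥ 1 - x₂ ≥ 1`, hence `x₂² ≥ x₁ ≥ 1` gives
`x₂ ≤ -1` and `x₁ ≥ 2`, so the point lies strictly outside the circle of radius `√2`. -/

section Parabolas

variable {α : Type*} [CommRing α] [LinearOrder α] [IsStrictOrderedRing α] {x y : α}

theorem one_le_of_le_sq_of_le_sq (hx : 0 < x) (hy : 0 < y) (hyx : y ≤ x ^ 2)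
    (hxy : x ≤ y ^ 2) : 1 ≤ x := by
  have hx4 : x * 1 ≤ x * x ^ 3 :=
    calc x * 1 = x := mul_one x
      _ ≤ y ^ 2 := hxy
      _ ≤ (x ^ 2) ^ 2 := pow_le_pow_left₀ hy.le hyx 2
      _ = x * x ^ 3 := by ring
  exact (one_le_pow_iff_of_nonneg hx.le (by norm_num)).1 (le_of_mul_le_mul_left hx4 hx)

theorem two_le_of_nonpos_of_le_sq (hy : y ≤ 0) (hsum : 1 ≤ x + y) (hxy : x ≤ y ^ 2) :
    2 ≤ x := by
  have hy_sq : 1 ≤ y ^ 2 := by linarith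
  have hy_abs : 1 ≤ |y| := (one_le_sq_iff_one_le_abs y).1 hy_sq
  rw [abs_of_nonpos hy] at hy_abs
  linarith

theorem one_le_and_one_le_or_four_le_sq_add_sq (hsum : 1 ≤ x + y) (hyx : y ≤ x ^ 2)
    (hxy : x ≤ y ^ 2) : (1 ≤ x ∧ 1 ≤ y) ∨ 4 ≤ x ^ 2 + y ^ 2 := by
  rcases le_or_gt y 0 with hy | hy
  · have hx := two_le_of_nonpos_of_le_sq hy hsum hxy
    right
    nlinarith [sq_nonneg y]
  rcases le_or_gt x 0 with hx | hx
  · have hy2 := two_le_of_nonpos_of_le_sq hx (by linarith) hyx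
    right
    nlinarith [sq_nonneg x]
  · exact Or.inl ⟨one_le_of_le_sq_of_le_sq hx hy hyx hxy, one_le_of_le_sq_of_le_sq hy hx hxy hyx⟩

theorem eq_one_of_one_le_of_sq_add_sq_eq_two (hx : 1 ≤ x) (hy : 1 ≤ y)
    (h : x ^ 2 + y ^ 2 = 2) : x = 1 ∧ y = 1 := by
  constructor <;> nlinarith

end Parabolas

/-- For every `(x₁,x₂) ∈ ℝ²` satisfying the Example 4 constraints
`x₁ + x₂ ≥ 1`, `x₁² + x₂² ≥ 1`, `9x₁² + x₂² ≥ 9`, `x₂ ≤ x₁²`, `x₁ ≤ x₂²`,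
`−50 ≤ x₁ ≤ 50`, `−50 ≤ x₂ ≤ 50`, one has `x₁² + x₂² ≥ 2`, with equality for a feasible
point iff `(x₁,x₂) = (1,1)`. -/
theorem example4_constrained_min :
    (∀ x₁ x₂ : ℝ, 1 ≤ x₁ + x₂ → 1 ≤ x₁ ^ 2 + x₂ ^ 2 → 9 ≤ 9 * x₁ ^ 2 + x₂ ^ 2 →
      x₂ ≤ x₁ ^ 2 → x₁ ≤ x₂ ^ 2 → -50 ≤ x₁ → x₁ ≤ 50 → -50 ≤ x₂ → x₂ ≤ 50 →
      2 ≤ x₁ ^ 2 + x₂ ^ 2) ∧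
    (∀ x₁ x₂ : ℝ, 1 ≤ x₁ + x₂ → 1 ≤ x₁ ^ 2 + x₂ ^ 2 → 9 ≤ 9 * x₁ ^ 2 + x₂ ^ 2 →
      x₂ ≤ x₁ ^ 2 → x₁ ≤ x₂ ^ 2 → -50 ≤ x₁ → x₁ ≤ 50 → -50 ≤ x₂ → x₂ ≤ 50 →
      (x₁ ^ 2 + x₂ ^ 2 = 2 ↔ (x₁, x₂) = ((1 : ℝ), (1 : ℝ)))) := by
  constructor
  · intro x₁ x₂ hsum _ _ hpar₁ hpar₂ _ _ _ _
    rcases one_le_and_one_le_or_four_le_sq_add_sq hsum hpar₁ hpar₂ with ⟨h₁, h₂⟩ | hfar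
    · nlinarith
    · linarith
  · intro x₁ x₂ hsum _ _ hpar₁ hpar₂ _ _ _ _
    constructor
    · intro heq
      rcases one_le_and_one_le_or_four_le_sq_add_sq hsum hpar₁ hpar₂ with ⟨h₁, h₂⟩ | hfar
      · obtain ⟨rfl, rfl⟩ := eq_one_of_one_le_of_sq_add_sq_eq_two h₁ h₂ heq
        rfl
      · linarith
    · rintro ⟨⟩
      norm_num
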